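/- arXiv:math/0010225 — 4 statements merged into one kernel-verified Lean document; each statement's English description precedes it below -/
import Mathlib

section
/- Let T : X → X be a map, X̂ ⊆ X, and U ⊆ X̂. Let T̂ denote the first return map of T to X̂ and τ̂_U the first return time to U under T̂. Suppose x ∈ U is such that p := τ̂_U(x) is finite and τ_{X̂}(T̂^i(x)) is finite for every 0 ≤ i < p. Then the first return time of x to U under T satisfies τ_U(x) = Σ_{i=0}^{p−1} τ_{X̂}(T̂^i(x)). -/
open MeasureTheory Filter Metric Set ProbabilityTheory Topology

/-- The set of points whose first return time to `U` under `T` exceeds `s`,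
i.e. `τ_U(x) > s` where `τ_U(x) = inf {n ≥ 1 : Tⁿ x ∈ U}`. -/
def lateReturn {X : Type*} (T : X → X) (U : Set X) (s : ℝ) : Set X :=
  {x | ∀ n : ℕ, 1 ≤ n → (n : ℝ) ≤ s → T^[n] x ∉ U}

/-- The normalized return-time distribution
`μ_U({x ∈ U : τ_U(x) > t / μ(U)})`. -/
noncomputable def retDist {X : Type*} [MeasurableSpace X] (μ : Measure X) (T : X → X)
    (U : Set X) (t : ℝ) : ℝ :=
  (μ[|U] (lateReturn T U (t / (μ U).toReal))).toReal

/-- The first return time `τ_U(x) = inf {n ≥ 1 : Tⁿ x ∈ U}` (junk value `0` if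
the orbit never returns). -/
noncomputable def retTimeNat {X : Type*} (T : X → X) (U : Set X) (x : X) : ℕ :=
  sInf {n | 0 < n ∧ T^[n] x ∈ U}

/-- The first return map `T̂(x) = T^{τ_A(x)}(x)` of `T` to `A`. -/
noncomputable def frMap {X : Type*} (T : X → X) (A : Set X) (x : X) : X :=
  T^[retTimeNat T A x] x


/-- The first return time to `U ⊆ X̂` under `T` decomposes as the sum of
the first return times to `X̂` along the induced orbit: `τ_U(x) = Σ_{i<p} τ_{X̂}(T̂ⁱ x)`
where `p = τ̂_U(x)` is the first return time of `x` to `U` under the induced map `T̂`. -/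
theorem stmt3 {X : Type*} (T : X → X) (Xhat U : Set X) (hU : U ⊆ Xhat)
    (x : X) (hx : x ∈ U)
    (p : ℕ) (hp : p = retTimeNat (frMap T Xhat) U x)
    (hfin : {n : ℕ | 0 < n ∧ (frMap T Xhat)^[n] x ∈ U}.Nonempty)
    (hfin' : ∀ i < p, {n : ℕ | 0 < n ∧ T^[n] ((frMap T Xhat)^[i] x) ∈ Xhat}.Nonempty) :
    retTimeNat T U x = ∑ i ∈ Finset.range p, retTimeNat T Xhat ((frMap T Xhat)^[i] x) := by
  classical
  set That := frMap T Xhat with hThat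
  set τ := retTimeNat T Xhat with hτ
  set S : ℕ → ℕ := fun k => ∑ i ∈ Finset.range k, τ (That^[i] x) with hS
  -- The induced orbit is along the original orbit
  have hiter : ∀ k, That^[k] x = T^[S k] x := by
    intro k
    induction k with
    | zero => simp [hS]
    | succ k ih =>
      have hsum : S (k + 1) = τ (That^[k] x) + S k := by
        simp [hS, Finset.sum_range_succ, Nat.add_comm]
      rw [Function.iterate_succ_apply', ih, hsum, Function.iterate_add_apply]
      show frMap T Xhat (T^[S k] x) = _
      rw [frMap, ← ih]
  have hpmem : 0 < p ∧ That^[p] x ∈ U := by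
    have := Nat.sInf_mem hfin
    rwa [← retTimeNat, ← hp] at this
  have hτmem : ∀ i < p, 0 < τ (That^[i] x) ∧ T^[τ (That^[i] x)] (That^[i] x) ∈ Xhat :=
    fun i hi => Nat.sInf_mem (hfin' i hi)
  have hSpos : 0 < S p :=
    Finset.sum_pos' (fun i _ => Nat.zero_le _)
      ⟨0, Finset.mem_range.2 hpmem.1, (hτmem 0 hpmem.1).1⟩
  have key : ∀ n, 0 < n → T^[n] x ∈ U → S p ≤ n := by
    intro n hn hnU
    by_contra hlt
    push_neg at hlt
    set k := Nat.findGreatest (fun i => S i ≤ n) p with hk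
    have hk_le : S k ≤ n :=
      Nat.findGreatest_spec (P := fun i => S i ≤ n) (Nat.zero_le p) (by simp [hS])
    have hkle : k ≤ p := Nat.findGreatest_le (P := fun i => S i ≤ n) p
    have hkp : k < p := lt_of_le_of_ne hkle (fun h => by rw [h] at hk_le; omega)
    have hk1 : n < S (k + 1) := by
      by_contra h
      push_neg at h
      exact Nat.findGreatest_is_greatest (Nat.lt_succ_self k) hkp h
    have hSsucc : S (k + 1) = S k + τ (That^[k] x) := Finset.sum_range_succ _ _
    rcases eq_or_lt_of_le hk_le with heq | hlt2
    · -- n = S k : contradicts minimality of p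
      have hk0 : 0 < k := by
        rcases Nat.eq_zero_or_pos k with h0 | h0
        · exfalso; rw [h0] at heq; simp [hS] at heq; omega
        · exact h0
      have hmemk : k ∈ {m : ℕ | 0 < m ∧ That^[m] x ∈ U} :=
        ⟨hk0, by rw [hiter k, heq]; exact hnU⟩
      have := Nat.sInf_le hmemk
      rw [← retTimeNat, ← hp] at this
      omega
    · -- S k < n : contradicts minimality of τ (That^[k] x)
      have hm : τ (That^[k] x) ≤ n - S k := by
        apply Nat.sInf_le
        refine ⟨by omega, ?_⟩
        rw [hiter k, ← Function.iterate_add_apply, Nat.sub_add_cancel hk_le]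
        exact hU hnU
      omega
  have hmem : S p ∈ {n : ℕ | 0 < n ∧ T^[n] x ∈ U} :=
    ⟨hSpos, by rw [← hiter]; exact hpmem.2⟩
  have hInfMem := Nat.sInf_mem (⟨S p, hmem⟩ : {n : ℕ | 0 < n ∧ T^[n] x ∈ U}.Nonempty)
  exact le_antisymm (Nat.sInf_le hmem) (key _ hInfMem.1 hInfMem.2)
end

section
/- Let (X, d) be a metric space and T : X → X a continuous map. Let z ∈ X be a non-periodic point, i.e. Tⁿ(z) ≠ z for every n ≥ 1. Then the minimal return time of the ball U_r(z), namely τ(U_r(z)) = inf{τ_{U_r(z)}(x) : x ∈ U_r(z)}, tends to +∞ as r → 0. -/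
open MeasureTheory Filter Metric Set Topology

/-- For a continuous map `T` of a metric space and a non-periodic point
`z`, the minimal return time of the ball `U_r(z)`, `τ(U_r(z)) = inf_{x ∈ U_r(z)} τ_{U_r(z)}(x)`,
tends to `+∞` as `r → 0`: for every `N` there is `r₀ > 0` such that for all `0 < r < r₀`
no point of `ball z r` returns to `ball z r` within the first `N` iterates. -/
theorem stmt5 {X : Type*} [MetricSpace X] (T : X → X) (hT : Continuous T)
    (z : X) (hz : ∀ n : ℕ, 1 ≤ n → T^[n] z ≠ z) :
    ∀ N : ℕ, ∃ r₀ > (0:ℝ), ∀ r, 0 < r → r < r₀ →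
      ∀ x ∈ ball z r, ∀ n : ℕ, 1 ≤ n → n ≤ N → T^[n] x ∉ ball z r := by
  intro N
  induction N with
  | zero =>
    exact ⟨1, one_pos, fun r _ _ x _ n h1 h0 _ => absurd (h1.trans h0) (by norm_num)⟩
  | succ N ih =>
    obtain ⟨r₀, hr₀, hN⟩ := ih
    set m := N + 1
    have hm : 1 ≤ m := Nat.le_add_left 1 N
    have hd : 0 < dist (T^[m] z) z := dist_pos.mpr (hz m hm)
    set d := dist (T^[m] z) z
    have hcont : Continuous (T^[m]) := hT.iterate m
    obtain ⟨δ, hδ, hδ'⟩ := Metric.continuous_iff.mp hcont z (d / 3) (by linarith)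
    refine ⟨min r₀ (min δ (d / 3)), by positivity, ?_⟩
    intro r hr hrlt x hx n h1 hn hmem
    rcases Nat.lt_succ_iff_lt_or_eq.mp (Nat.lt_succ_of_le hn) with h | h
    · exact hN r hr (hrlt.trans_le (min_le_left _ _)) x hx n h1 (Nat.lt_succ_iff.mp h) hmem
    · subst h
      have hrδ : r < δ := hrlt.trans_le ((min_le_right _ _).trans (min_le_left _ _))
      have hrd : r < d / 3 := hrlt.trans_le ((min_le_right _ _).trans (min_le_right _ _))
      have h1 : dist (T^[m] x) (T^[m] z) < d / 3 :=
        hδ' x (lt_trans (mem_ball.mp hx) hrδ)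
      have h2 : dist (T^[m] x) z < d / 3 := lt_trans (mem_ball.mp hmem) hrd
      have := dist_triangle (T^[m] z) (T^[m] x) z
      rw [dist_comm (T^[m] z) (T^[m] x)] at this
      linarith
end

section
/- Let X ⊆ ℝ be compact, T a map of X, m a Borel probability measure on X and μ a T-invariant Borel probability measure satisfying the exponential decay of correlations |∫ φ∘Tⁿ · ψ dμ − ∫φ dμ ∫ψ dμ| ≤ C ‖φ‖_{L¹(m)} ‖ψ‖_BV θⁿ for all n ≥ 1, φ ∈ L¹(m), ψ of bounded variation, with constants C > 0, θ ∈ (0,1). Then for every X-interval U with μ(U) > 0 and every N ≥ 1: a_N(U) := μ_U({x ∈ U : τ_U(x) ≤ N}) ≤ (3C/(1−θ)) · (m(U)/μ(U)) · θ^{τ(U)} + N μ(U), where τ(U) = inf{τ_U(x) : x ∈ U}. -/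
/-!
Apply the decay of correlations to `φ = ψ = 1_U`. As `U` is an `X`-interval, `1_U` is the product
of the indicators of an upper and a lower set, so `‖1_U‖_BV ≤ 1 + 2`, and the correlation bound
reads `μ(U ∩ T⁻ⁿU) ≤ μ(U)² + 3C m(U) θⁿ`. A point of `U` returning within `N` steps lies in some
`U ∩ T⁻ⁿU` with `τ(U) ≤ n ≤ N`; summing over these `n` gives at most `N μ(U)²` plus a geometric
tail `3C m(U) θ^{τ(U)}/(1-θ)`, and dividing by `μ(U)` gives the claim.
-/

open MeasureTheory Filter Metric Set ProbabilityTheory Topology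

/-- The minimal return time `τ(U) = inf {τ_U(x) : x ∈ U}` of a set `U` under `T`
(junk value `0` if no point of `U` ever returns). -/
noncomputable def minRet {X : Type*} (T : X → X) (U : Set X) : ℕ :=
  sInf {n | 0 < n ∧ ∃ x ∈ U, T^[n] x ∈ U}

section Variation

variable {α : Type*} [LinearOrder α]

theorem IsUpperSet.eVariationOn_indicator_one_le {A : Set α} (hA : IsUpperSet A) (s : Set α) :
    eVariationOn (A.indicator (1 : α → ℝ)) s ≤ 1 := by
  have hmono : Monotone (A.indicator (1 : α → ℝ)) := by
    intro x y hxy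
    by_cases hx : x ∈ A
    · simp [hx, hA hxy hx]
    · by_cases hy : y ∈ A <;> simp [hx, hy]
  rw [eVariationOn.eq_biSup_inter_Icc]
  refine iSup₂_le fun p ⟨hp₁, hp₂, _⟩ ↦ ?_
  rw [(hmono.monotoneOn s).eVariationOn_eq hp₁ hp₂, ENNReal.ofReal_le_one]
  by_cases h₁ : p.1 ∈ A <;> by_cases h₂ : p.2 ∈ A <;> simp [h₁, h₂]

theorem IsLowerSet.eVariationOn_indicator_one_le {A : Set α} (hA : IsLowerSet A) (s : Set α) :
    eVariationOn (A.indicator (1 : α → ℝ)) s ≤ 1 := by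
  rw [← eVariationOn.comp_ofDual]
  exact hA.toDual.eVariationOn_indicator_one_le _

theorem Set.OrdConnected.eVariationOn_indicator_one_le {J : Set α} (hJ : J.OrdConnected)
    (s : Set α) : eVariationOn (J.indicator (1 : α → ℝ)) s ≤ 2 := by
  have hbound (A : Set α) : ∀ x ∈ s, ‖A.indicator (1 : α → ℝ) x‖ₑ ≤ 1 := fun x _ ↦ by
    by_cases hx : x ∈ A <;> simp [hx]
  rw [← hJ.upperClosure_inter_lowerClosure, inter_indicator_one]
  calc _ ≤ 1 * eVariationOn ((lowerClosure J : Set α).indicator 1) s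
        + 1 * eVariationOn ((upperClosure J : Set α).indicator 1) s :=
        eVariation_mul_le (hbound _) (hbound _)
    _ ≤ 1 * 1 + 1 * 1 := by
        gcongr
        exacts [(lowerClosure J).lower.eVariationOn_indicator_one_le s,
          (upperClosure J).upper.eVariationOn_indicator_one_le s]
    _ = 2 := by norm_num

noncomputable def bvNorm (ψ : α → ℝ) (s : Set α) : ℝ :=
  (⨆ x ∈ s, |ψ x|) + (eVariationOn ψ s).toReal

theorem Set.OrdConnected.eVariationOn_inter_indicator_one_le {J : Set α} (hJ : J.OrdConnected)
    (s : Set α) : eVariationOn ((s ∩ J).indicator (1 : α → ℝ)) s ≤ 2 := by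
  rw [eVariationOn.congr (g := J.indicator 1) fun x hx ↦ by
    by_cases hxJ : x ∈ J <;> simp [hx, hxJ]]
  exact hJ.eVariationOn_indicator_one_le s

theorem Set.OrdConnected.bvNorm_inter_indicator_one_le {J : Set α} (hJ : J.OrdConnected)
    (s : Set α) : bvNorm ((s ∩ J).indicator 1) s ≤ 3 := by
  have hsup : (⨆ x ∈ s, |(s ∩ J).indicator (1 : α → ℝ) x|) ≤ 1 :=
    Real.iSup_le (fun x ↦ Real.iSup_le (fun _ ↦ by
      by_cases hx : x ∈ s ∩ J <;> simp [hx]) zero_le_one) zero_le_one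
  have hvar : (eVariationOn ((s ∩ J).indicator (1 : α → ℝ)) s).toReal ≤ 2 :=
    ENNReal.toReal_le_of_le_ofReal zero_le_two <| by
      simpa using hJ.eVariationOn_inter_indicator_one_le s
  unfold bvNorm
  linarith

end Variation

theorem integral_indicator_one_comp_mul_indicator_one {Ω : Type*} [MeasurableSpace Ω]
    {μ : Measure Ω} {f : Ω → Ω} (hf : Measurable f) {s t : Set Ω} (hs : MeasurableSet s)
    (ht : MeasurableSet t) :
    ∫ x, s.indicator (1 : Ω → ℝ) (f x) * t.indicator 1 x ∂μ = μ.real (t ∩ f ⁻¹' s) := by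
  rw [← integral_indicator_one (ht.inter (hf hs)), inter_indicator_one]
  congr 1 with x
  exact mul_comm _ _

section Returns

variable {X : Type*} (T : X → X) (U : Set X) (N : ℕ)

-- The lower bound `1` is needed because `minRet T U = 0` when no point of `U` returns.
theorem inter_setOf_return_subset_biUnion :
    U ∩ {x | ∃ n, 1 ≤ n ∧ n ≤ N ∧ T^[n] x ∈ U} ⊆
      ⋃ n ∈ Finset.Ico (max (minRet T U) 1) (N + 1), U ∩ T^[n] ⁻¹' U := by
  rintro x ⟨hxU, n, hn, hnN, hTn⟩
  have hmin : minRet T U ≤ n := Nat.sInf_le ⟨hn, x, hxU, hTn⟩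
  exact mem_biUnion (Finset.mem_Ico.2 ⟨max_le hmin hn, Nat.lt_succ_of_le hnN⟩) ⟨hxU, hTn⟩

theorem measureReal_inter_setOf_return_le [MeasurableSpace X] (μ : Measure X)
    [IsFiniteMeasure μ] {a b θ : ℝ} (ha : 0 ≤ a) (hb : 0 ≤ b) (hθ₀ : 0 ≤ θ) (hθ₁ : θ < 1)
    (hcorr : ∀ n, 1 ≤ n → μ.real (U ∩ T^[n] ⁻¹' U) ≤ a + b * θ ^ n) :
    μ.real (U ∩ {x | ∃ n, 1 ≤ n ∧ n ≤ N ∧ T^[n] x ∈ U})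
      ≤ N * a + b * (θ ^ minRet T U / (1 - θ)) := by
  set k := max (minRet T U) 1
  have hcard : ((Finset.Ico k (N + 1)).card : ℝ) ≤ N := by
    rw [Nat.card_Ico]
    exact_mod_cast (by omega : N + 1 - k ≤ N)
  calc _ ≤ μ.real (⋃ n ∈ Finset.Ico k (N + 1), U ∩ T^[n] ⁻¹' U) :=
        measureReal_mono (inter_setOf_return_subset_biUnion T U N) (measure_ne_top _ _)
    _ ≤ ∑ n ∈ Finset.Ico k (N + 1), μ.real (U ∩ T^[n] ⁻¹' U) :=
        measureReal_biUnion_finset_le _ _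
    _ ≤ ∑ n ∈ Finset.Ico k (N + 1), (a + b * θ ^ n) :=
        Finset.sum_le_sum fun n hn ↦ hcorr n ((le_max_right _ _).trans (Finset.mem_Ico.1 hn).1)
    _ = (Finset.Ico k (N + 1)).card * a + b * ∑ n ∈ Finset.Ico k (N + 1), θ ^ n := by
        rw [Finset.sum_add_distrib, Finset.sum_const, nsmul_eq_mul, Finset.mul_sum]
    _ ≤ N * a + b * (θ ^ k / (1 - θ)) := by
        gcongr
        exact geom_sum_Ico_le_of_lt_one hθ₀ hθ₁
    _ ≤ N * a + b * (θ ^ minRet T U / (1 - θ)) := by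
        have : 0 < 1 - θ := by linarith
        gcongr N * a + b * (?_ / (1 - θ))
        exact pow_le_pow_of_le_one hθ₀ hθ₁.le (le_max_left _ _)

end Returns

theorem stmt9_general (X : Set ℝ) (T : ℝ → ℝ)
    (m μ : Measure ℝ) [IsProbabilityMeasure m] [IsProbabilityMeasure μ]
    (hinv : MeasurePreserving T μ μ)
    (C θ : ℝ) (hC : 0 < C) (hθ : θ ∈ Ioo (0:ℝ) 1)
    (hdec : ∀ n : ℕ, 1 ≤ n → ∀ φ ψ : ℝ → ℝ, Integrable φ m → eVariationOn ψ X ≠ ⊤ →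
      |(∫ x, φ (T^[n] x) * ψ x ∂μ) - (∫ x, φ x ∂μ) * ∫ x, ψ x ∂μ|
        ≤ C * (∫ x, |φ x| ∂m) * ((⨆ x ∈ X, |ψ x|) + (eVariationOn ψ X).toReal) * θ ^ n)
    (U : Set ℝ) (hU : ∃ J : Set ℝ, J.OrdConnected ∧ U = X ∩ J)
    (hUmeas : MeasurableSet U) (hUpos : 0 < μ U) (N : ℕ) :
    (μ[|U] {x | ∃ n : ℕ, 1 ≤ n ∧ n ≤ N ∧ T^[n] x ∈ U}).toReal
      ≤ 3 * C / (1 - θ) * ((m U).toReal / (μ U).toReal) * θ ^ minRet T U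
        + N * (μ U).toReal := by
  obtain ⟨hθ₀, hθ₁⟩ := hθ
  obtain ⟨J, hJ, rfl⟩ := hU
  set U := X ∩ J
  set ψ : ℝ → ℝ := U.indicator 1
  have hψ_var : eVariationOn ψ X ≠ ⊤ :=
    ((hJ.eVariationOn_inter_indicator_one_le X).trans_lt (by norm_num)).ne
  have hψ_bv : bvNorm ψ X ≤ 3 := hJ.bvNorm_inter_indicator_one_le X
  have hcorr (n : ℕ) (hn : 1 ≤ n) :
      μ.real (U ∩ T^[n] ⁻¹' U) ≤ μ.real U ^ 2 + 3 * C * m.real U * θ ^ n := by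
    have h := hdec n hn ψ ψ ((integrable_const 1).indicator hUmeas) hψ_var
    change _ ≤ C * _ * bvNorm ψ X * θ ^ n at h
    have hψ_abs (x : ℝ) : |ψ x| = ψ x :=
      abs_of_nonneg (indicator_nonneg (fun _ _ ↦ zero_le_one) x)
    simp only [hψ_abs, ψ, integral_indicator_one hUmeas,
      integral_indicator_one_comp_mul_indicator_one (hinv.measurable.iterate n) hUmeas hUmeas] at h
    have hbv := mul_le_mul_of_nonneg_left hψ_bv (by positivity : 0 ≤ C * m.real U * θ ^ n)
    linarith [(abs_le.1 h).2]
  have hret := measureReal_inter_setOf_return_le T U N μ (sq_nonneg _) (by positivity)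
    hθ₀.le hθ₁ hcorr
  have hpos : 0 < μ.real U := ENNReal.toReal_pos hUpos.ne' (measure_ne_top μ U)
  rw [cond_apply hUmeas, ENNReal.toReal_mul, ENNReal.toReal_inv]
  simp only [← measureReal_def]
  calc _ ≤ (μ.real U)⁻¹ *
        (N * μ.real U ^ 2 + 3 * C * m.real U * (θ ^ minRet T U / (1 - θ))) := by gcongr
    _ = _ := by field_simp; ring

/-- If `(T, μ)` has exponential decay of correlations against `L¹(m)`
and bounded-variation observables, with constants `C > 0`, `θ ∈ (0,1)`, then for every
`X`-interval `U` of positive measure and every `N ≥ 1`,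
`a_N(U) = μ_U(τ_U ≤ N) ≤ (3C/(1−θ)) (m(U)/μ(U)) θ^{τ(U)} + N μ(U)`. -/
theorem stmt9 (X : Set ℝ) (hX : IsCompact X) (T : ℝ → ℝ)
    (m μ : Measure ℝ) [IsProbabilityMeasure m] [IsProbabilityMeasure μ]
    (hmX : m X = 1) (hμX : μ X = 1) (hinv : MeasurePreserving T μ μ)
    (C θ : ℝ) (hC : 0 < C) (hθ : θ ∈ Ioo (0:ℝ) 1)
    (hdec : ∀ n : ℕ, 1 ≤ n → ∀ φ ψ : ℝ → ℝ, Integrable φ m → eVariationOn ψ X ≠ ⊤ →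
      |(∫ x, φ (T^[n] x) * ψ x ∂μ) - (∫ x, φ x ∂μ) * ∫ x, ψ x ∂μ|
        ≤ C * (∫ x, |φ x| ∂m) * ((⨆ x ∈ X, |ψ x|) + (eVariationOn ψ X).toReal) * θ ^ n)
    (U : Set ℝ) (hU : ∃ J : Set ℝ, J.OrdConnected ∧ U = X ∩ J)
    (hUmeas : MeasurableSet U) (hUpos : 0 < μ U) (N : ℕ) (hN : 1 ≤ N) :
    (μ[|U] {x | ∃ n : ℕ, 1 ≤ n ∧ n ≤ N ∧ T^[n] x ∈ U}).toReal
      ≤ 3 * C / (1 - θ) * ((m U).toReal / (μ U).toReal) * θ ^ minRet T U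
        + N * (μ U).toReal :=
  stmt9_general X T m μ hinv C θ hC hθ hdec U hU hUmeas hUpos N
end

section
/- (Koebe Principle for maps with non-positive Schwarzian derivative.) Let T : [0,1] → [0,1] be a C² map such that x ↦ 1/√|T'(x)| is locally convex on every interval where T' does not vanish. Let W ⊆ W' be intervals and n ≥ 1 be such that Tⁿ : W' → Tⁿ(W') is a C² diffeomorphism. If Tⁿ(W') contains a δ-scaled neighborhood of Tⁿ(W), i.e. both components of Tⁿ(W') ∖ Tⁿ(W) have length at least δ·|Tⁿ(W)|, then the distortion of Tⁿ on W is bounded: sup_{s,t ∈ W} |(Tⁿ)'(s)| / |(Tⁿ)'(t)| ≤ ((1+δ)/δ)². -/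
/-!
Put `F = Tⁿ` and `h = 1 / √|F'|`, so that `|F y - F x| = ∫ₓʸ h⁻²`. The inverse square of an
affine function integrates to `(y - x) / (ℓ x * ℓ y)`, so comparing `h` with its chords shows that
convexity of `h` is equivalent to the two-point inequality `|y - x| √|F' x * F' y| ≤ |F y - F x|`
for all pairs of points. That inequality is multiplicative under composition, so it passes from `T`
to `Tⁿ`, and `h` is convex on `[a, b]`.

For convex `h` and `s ∈ [c, d]`, the line through `(s, h s)` and `(d, h d)` lies above `h` on
`[s, d]` and below it on `[d, b]`; integrating gives `δ (h d - h s) ≤ h s` when `Tⁿ[d, b]` is at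
least `δ |Tⁿ[c, d]|` long. The same holds at `c`, and `h ≤ max (h c) (h d)` on `[c, d]`, so
`h t ≤ (1 + δ) / δ * h s`, which squares to the claim.
-/

open Set intervalIntegral

lemma exists_zero_forall_pos_Ioc {φ : ℝ → ℝ} {x q : ℝ} (hxq : x ≤ q)
    (hφ : ContinuousOn φ (Icc x q)) (hx : φ x ≤ 0) (hq : 0 < φ q) :
    ∃ p ∈ Ico x q, φ p = 0 ∧ ∀ t ∈ Ioc p q, 0 < φ t := by
  set Z := Icc x q ∩ φ ⁻¹' {0}
  have hZ : IsClosed Z := hφ.preimage_isClosed_of_isClosed isClosed_Icc isClosed_singleton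
  have hIVT : ∀ t ∈ Icc x q, φ t ≤ 0 → ∃ z ∈ Z, t ≤ z := by
    intro t ht hφt
    obtain ⟨z, hz, hz0⟩ :=
      intermediate_value_Icc ht.2 (hφ.mono (Icc_subset_Icc_left ht.1)) ⟨hφt, hq.le⟩
    exact ⟨z, ⟨Icc_subset_Icc_left ht.1 hz, hz0⟩, hz.1⟩
  obtain ⟨z, hz, -⟩ := hIVT x (left_mem_Icc.2 hxq) hx
  have hbdd : BddAbove Z := ⟨q, fun t ht => ht.1.2⟩
  have hp : sSup Z ∈ Z := hZ.csSup_mem ⟨z, hz⟩ hbdd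
  refine ⟨sSup Z, ⟨hp.1.1, hp.1.2.lt_of_ne fun h => hq.ne' (h ▸ hp.2)⟩, hp.2, fun t ht => ?_⟩
  by_contra! hφt
  obtain ⟨w, hw, htw⟩ := hIVT t ⟨hp.1.1.trans ht.1.le, ht.2⟩ hφt
  exact (le_csSup hbdd hw).not_gt (ht.1.trans_le htw)

lemma exists_zero_forall_pos_Ico {φ : ℝ → ℝ} {q z : ℝ} (hqz : q ≤ z)
    (hφ : ContinuousOn φ (Icc q z)) (hz : φ z ≤ 0) (hq : 0 < φ q) :
    ∃ r ∈ Ioc q z, φ r = 0 ∧ ∀ t ∈ Ico q r, 0 < φ t := by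
  obtain ⟨p, hp, hp0, hpos⟩ := exists_zero_forall_pos_Ioc (φ := fun t => φ (-t))
    (neg_le_neg hqz) (hφ.comp continuousOn_neg fun t ht => ⟨le_neg.2 ht.2, neg_le.2 ht.1⟩)
    (by simpa using hz) (by simpa using hq)
  exact ⟨-p, ⟨lt_neg.2 hp.2, neg_le.2 hp.1⟩, hp0,
    fun t ht => by simpa using hpos (-t) ⟨lt_neg.2 ht.2, neg_le_neg ht.1⟩⟩

section InverseSquareIntegrals

variable {f g h : ℝ → ℝ} {x y A k : ℝ}

lemma affine_pos_of_mem_Icc (hA : 0 < A) (hB : 0 < A + k * (y - x)) {t : ℝ} (ht : t ∈ Icc x y) :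
    0 < A + k * (t - x) := by
  rcases le_total 0 k with hk | hk <;> nlinarith [ht.1, ht.2]

lemma intervalIntegrable_inv_sq (hxy : x ≤ y) (hf : ContinuousOn f (Icc x y))
    (hne : ∀ t ∈ Icc x y, f t ≠ 0) :
    IntervalIntegrable (fun t => (f t)⁻¹ ^ 2) MeasureTheory.volume x y :=
  ((hf.inv₀ hne).pow 2).intervalIntegrable_of_Icc hxy

-- `t ↦ (t - x) / (A * (A + k * (t - x)))` is a primitive, with no case split on `k = 0`.
lemma integral_inv_sq_affine (hxy : x ≤ y) (hA : 0 < A) (hB : 0 < A + k * (y - x)) :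
    ∫ t in x..y, (A + k * (t - x))⁻¹ ^ 2 = (y - x) / (A * (A + k * (y - x))) := by
  have hpos := fun t (ht : t ∈ Icc x y) => affine_pos_of_mem_Icc hA hB ht
  have hprim : ∀ t ∈ uIcc x y, HasDerivAt (fun t => (t - x) / (A * (A + k * (t - x))))
      ((A + k * (t - x))⁻¹ ^ 2) t := by
    intro t ht
    rw [uIcc_of_le hxy] at ht
    have hℓ : HasDerivAt (fun t => A * (A + k * (t - x))) (A * k) t := by
      simpa using (((hasDerivAt_id t).sub_const x).const_mul k).const_add A |>.const_mul A
    have hne : A * (A + k * (t - x)) ≠ 0 := (mul_pos hA (hpos t ht)).ne'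
    refine (((hasDerivAt_id' t).sub_const x).div hℓ hne).congr_deriv ?_
    have := (hpos t ht).ne'
    field_simp
    ring
  rw [integral_eq_sub_of_hasDerivAt hprim (intervalIntegrable_inv_sq hxy
    (by fun_prop) fun t ht => (hpos t ht).ne')]
  simp

lemma integral_inv_sq_le_of_le (hxy : x ≤ y) (hf : ContinuousOn f (Icc x y))
    (hg : ContinuousOn g (Icc x y)) (hfpos : ∀ t ∈ Icc x y, 0 < f t)
    (hfg : ∀ t ∈ Icc x y, f t ≤ g t) :
    ∫ t in x..y, (g t)⁻¹ ^ 2 ≤ ∫ t in x..y, (f t)⁻¹ ^ 2 := by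
  have hgpos t (ht : t ∈ Icc x y) := (hfpos t ht).trans_le (hfg t ht)
  refine integral_mono_on hxy (intervalIntegrable_inv_sq hxy hg fun t ht => (hgpos t ht).ne')
    (intervalIntegrable_inv_sq hxy hf fun t ht => (hfpos t ht).ne') fun t ht => ?_
  have := hgpos t ht
  exact pow_le_pow_left₀ (by positivity) (inv_anti₀ (hfpos t ht) (hfg t ht)) 2

lemma div_mul_le_integral_inv_sq_of_le_affine (hxy : x ≤ y) (hA : 0 < A)
    (hB : 0 < A + k * (y - x)) (hh : ContinuousOn h (Icc x y)) (hpos : ∀ t ∈ Icc x y, 0 < h t)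
    (hle : ∀ t ∈ Icc x y, h t ≤ A + k * (t - x)) :
    (y - x) / (A * (A + k * (y - x))) ≤ ∫ t in x..y, (h t)⁻¹ ^ 2 := by
  rw [← integral_inv_sq_affine hxy hA hB]
  exact integral_inv_sq_le_of_le hxy hh (by fun_prop) hpos hle

lemma integral_inv_sq_le_div_mul_of_affine_le (hxy : x ≤ y) (hA : 0 < A)
    (hB : 0 < A + k * (y - x)) (hh : ContinuousOn h (Icc x y))
    (hle : ∀ t ∈ Icc x y, A + k * (t - x) ≤ h t) :
    ∫ t in x..y, (h t)⁻¹ ^ 2 ≤ (y - x) / (A * (A + k * (y - x))) := by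
  rw [← integral_inv_sq_affine hxy hA hB]
  exact integral_inv_sq_le_of_le hxy (by fun_prop) hh
    (fun t ht => affine_pos_of_mem_Icc hA hB ht) hle

lemma integral_inv_sq_lt_div_mul_of_affine_le (hxy : x < y) (hA : 0 < A)
    (hB : 0 < A + k * (y - x)) (hh : ContinuousOn h (Icc x y))
    (hle : ∀ t ∈ Icc x y, A + k * (t - x) ≤ h t) (hlt : ∃ t ∈ Icc x y, A + k * (t - x) < h t) :
    ∫ t in x..y, (h t)⁻¹ ^ 2 < (y - x) / (A * (A + k * (y - x))) := by
  have hℓ t (ht : t ∈ Icc x y) := affine_pos_of_mem_Icc hA hB ht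
  have hpos t (ht : t ∈ Icc x y) := (hℓ t ht).trans_le (hle t ht)
  rw [← integral_inv_sq_affine hxy.le hA hB]
  refine integral_lt_integral_of_continuousOn_of_le_of_exists_lt hxy
    ((hh.inv₀ fun t ht => (hpos t ht).ne').pow 2)
    (((show ContinuousOn (fun t => A + k * (t - x)) (Icc x y) by fun_prop).inv₀
      fun t ht => (hℓ t ht).ne').pow 2) (fun t ht => ?_) ?_
  · have := hpos t (Ioc_subset_Icc_self ht)
    exact pow_le_pow_left₀ (by positivity)
      (inv_anti₀ (hℓ t (Ioc_subset_Icc_self ht)) (hle t (Ioc_subset_Icc_self ht))) 2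
  · obtain ⟨t, ht, hlt⟩ := hlt
    have := (hℓ t ht).trans hlt
    exact ⟨t, ht, pow_lt_pow_left₀ (inv_strictAnti₀ (hℓ t ht) hlt) (by positivity) two_ne_zero⟩

theorem ConvexOn.div_mul_le_integral_inv_sq (hxy : x ≤ y) (hconv : ConvexOn ℝ (Icc x y) h)
    (hh : ContinuousOn h (Icc x y)) (hpos : ∀ t ∈ Icc x y, 0 < h t) :
    (y - x) / (h x * h y) ≤ ∫ t in x..y, (h t)⁻¹ ^ 2 := by
  rcases hxy.eq_or_lt with rfl | hxy
  · simp
  have hx : x ∈ Icc x y := left_mem_Icc.2 hxy.le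
  have hy : y ∈ Icc x y := right_mem_Icc.2 hxy.le
  set k := (h y - h x) / (y - x)
  have hky : h x + k * (y - x) = h y := by
    rw [div_mul_cancel₀ _ (sub_pos.2 hxy).ne']
    ring
  have hchord : ∀ t ∈ Icc x y, h t ≤ h x + k * (t - x) := by
    intro t ht
    rcases ht.1.eq_or_lt with rfl | hxt
    · simp
    have := hconv.secant_mono hx ht hy hxt.ne' hxy.ne' ht.2
    rw [div_le_iff₀ (sub_pos.2 hxt)] at this
    linarith
  have := div_mul_le_integral_inv_sq_of_le_affine hxy.le (hpos x hx) (hky ▸ hpos y hy) hh hpos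
    hchord
  rwa [hky] at this

theorem ConvexOn.sub_mul_integral_inv_sq_le {s d b : ℝ} (hsd : s ≤ d) (hdb : d ≤ b)
    (hconv : ConvexOn ℝ (Icc s b) h) (hh : ContinuousOn h (Icc s b))
    (hpos : ∀ t ∈ Icc s b, 0 < h t) :
    (h d - h s) * ∫ t in d..b, (h t)⁻¹ ^ 2 ≤ h s * ∫ t in s..d, (h t)⁻¹ ^ 2 := by
  have hs : s ∈ Icc s b := ⟨le_rfl, hsd.trans hdb⟩
  have hd : d ∈ Icc s b := ⟨hsd, hdb⟩
  have hI : 0 ≤ ∫ t in s..d, (h t)⁻¹ ^ 2 := integral_nonneg hsd fun t _ => by positivity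
  rcases le_or_gt (h d) (h s) with hle | hlt
  · exact (mul_nonpos_of_nonpos_of_nonneg (sub_nonpos.2 hle)
      (integral_nonneg hdb fun t _ => by positivity)).trans (mul_nonneg (hpos s hs).le hI)
  have hsd' : s < d := hsd.lt_of_ne (by rintro rfl; exact lt_irrefl _ hlt)
  set k := (h d - h s) / (d - s)
  have hk : 0 < k := div_pos (sub_pos.2 hlt) (sub_pos.2 hsd')
  have hkd : k * (d - s) = h d - h s := div_mul_cancel₀ _ (sub_pos.2 hsd').ne'
  have hsub₁ : Icc s d ⊆ Icc s b := Icc_subset_Icc_right hdb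
  have hsub₂ : Icc d b ⊆ Icc s b := Icc_subset_Icc_left hsd
  have hleft := (hconv.subset hsub₁ (convex_Icc s d)).div_mul_le_integral_inv_sq hsd
    (hh.mono hsub₁) fun t ht => hpos t (hsub₁ ht)
  -- beyond `d`, the convex `h` stays above the extension of its chord over `[s, d]`
  have hright : ∫ t in d..b, (h t)⁻¹ ^ 2 ≤ (b - d) / (h d * (h d + k * (b - d))) := by
    refine integral_inv_sq_le_div_mul_of_affine_le hdb (hpos d hd)
      (by have := hpos d hd; positivity) (hh.mono hsub₂) fun t ht => ?_
    rcases ht.1.eq_or_lt with rfl | hdt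
    · simp
    have := hconv.secant_mono hs hd (hsub₂ ht) hsd'.ne' (hsd'.trans hdt).ne' ht.1
    rw [le_div_iff₀ (by linarith)] at this
    have : k * (t - s) = k * (t - d) + k * (d - s) := by ring
    linarith
  have hdpos := hpos d hd
  have hspos := hpos s hs
  calc (h d - h s) * ∫ t in d..b, (h t)⁻¹ ^ 2
      ≤ (h d - h s) * ((b - d) / (h d * (h d + k * (b - d)))) :=
        mul_le_mul_of_nonneg_left hright (sub_pos.2 hlt).le
    _ ≤ (h d - h s) * (1 / (k * h d)) := by
        refine mul_le_mul_of_nonneg_left ?_ (sub_pos.2 hlt).le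
        rw [div_le_div_iff₀ (by positivity) (by positivity)]
        nlinarith
    _ = h s * ((d - s) / (h s * h d)) := by
        rw [← hkd]
        field_simp
    _ ≤ h s * ∫ t in s..d, (h t)⁻¹ ^ 2 := mul_le_mul_of_nonneg_left hleft hspos.le

theorem ConvexOn.le_mul_of_integral_inv_sq_le {c s d b δ : ℝ} (hδ : 0 < δ) (hcs : c ≤ s)
    (hsd : s ≤ d) (hdb : d ≤ b) (hconv : ConvexOn ℝ (Icc c b) h) (hh : ContinuousOn h (Icc c b))
    (hpos : ∀ t ∈ Icc c b, 0 < h t)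
    (hscale : δ * ∫ t in c..d, (h t)⁻¹ ^ 2 ≤ ∫ t in d..b, (h t)⁻¹ ^ 2) :
    h d ≤ (1 + δ) / δ * h s := by
  have hs : s ∈ Icc c b := ⟨hcs, hsd.trans hdb⟩
  have hK : 1 ≤ (1 + δ) / δ := by rw [le_div_iff₀ hδ]; linarith
  rcases le_or_gt (h d) (h s) with hle | hlt
  · exact hle.trans (le_mul_of_one_le_left (hpos s hs).le hK)
  have hsd' : s < d := hsd.lt_of_ne (by rintro rfl; exact lt_irrefl _ hlt)
  have hsub : Icc s b ⊆ Icc c b := Icc_subset_Icc_left hcs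
  have hsub' : Icc c d ⊆ Icc c b := Icc_subset_Icc_right hdb
  have hkey := (hconv.subset hsub (convex_Icc s b)).sub_mul_integral_inv_sq_le hsd hdb
    (hh.mono hsub) fun t ht => hpos t (hsub ht)
  have hint u (hu : u ∈ Icc c d) v (hv : v ∈ Icc c d) (huv : u ≤ v) :=
    intervalIntegrable_inv_sq huv (hh.mono ((Icc_subset_Icc hu.1 hv.2).trans hsub'))
      fun t ht => (hpos t (hsub' (Icc_subset_Icc hu.1 hv.2 ht))).ne'
  have hcd : c ≤ d := hcs.trans hsd
  have hsd_pos : 0 < ∫ t in s..d, (h t)⁻¹ ^ 2 :=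
    intervalIntegral_pos_of_pos_on (hint s ⟨hcs, hsd⟩ d ⟨hcd, le_rfl⟩ hsd)
      (fun t ht => by have := hpos t ⟨hcs.trans ht.1.le, ht.2.le.trans hdb⟩; positivity) hsd'
  have hsd_le : ∫ t in s..d, (h t)⁻¹ ^ 2 ≤ ∫ t in c..d, (h t)⁻¹ ^ 2 := by
    rw [← integral_add_adjacent_intervals (hint c ⟨le_rfl, hcd⟩ s ⟨hcs, hsd⟩ hcs)
      (hint s ⟨hcs, hsd⟩ d ⟨hcd, le_rfl⟩ hsd)]
    have : 0 ≤ ∫ t in c..s, (h t)⁻¹ ^ 2 := integral_nonneg hcs fun t _ => by positivity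
    linarith
  have : δ * (h d - h s) ≤ h s := by
    refine le_of_mul_le_mul_right ?_ hsd_pos
    calc δ * (h d - h s) * ∫ t in s..d, (h t)⁻¹ ^ 2
        ≤ δ * (h d - h s) * ∫ t in c..d, (h t)⁻¹ ^ 2 :=
          mul_le_mul_of_nonneg_left hsd_le (mul_pos hδ (sub_pos.2 hlt)).le
      _ = (h d - h s) * (δ * ∫ t in c..d, (h t)⁻¹ ^ 2) := by ring
      _ ≤ (h d - h s) * ∫ t in d..b, (h t)⁻¹ ^ 2 :=
          mul_le_mul_of_nonneg_left hscale (sub_pos.2 hlt).le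
      _ ≤ h s * ∫ t in s..d, (h t)⁻¹ ^ 2 := hkey
  rw [div_mul_eq_mul_div, le_div_iff₀ hδ]
  linarith

theorem ConvexOn.comp_neg_Icc {a b : ℝ} (hconv : ConvexOn ℝ (Icc a b) h) :
    ConvexOn ℝ (Icc (-b) (-a)) fun t => h (-t) := by
  refine ⟨convex_Icc _ _, fun u hu v hv α β hα hβ hαβ => ?_⟩
  have := hconv.2 (x := -u) (y := -v) ⟨le_neg.2 hu.2, neg_le.2 hu.1⟩ ⟨le_neg.2 hv.2, neg_le.2 hv.1⟩
    hα hβ hαβ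
  convert this using 2
  simp only [smul_eq_mul]
  ring

theorem ConvexOn.koebe {a c d b δ : ℝ} (hδ : 0 < δ) (hac : a ≤ c) (hcd : c ≤ d) (hdb : d ≤ b)
    (hconv : ConvexOn ℝ (Icc a b) h) (hh : ContinuousOn h (Icc a b))
    (hpos : ∀ t ∈ Icc a b, 0 < h t)
    (hscale₁ : δ * ∫ t in c..d, (h t)⁻¹ ^ 2 ≤ ∫ t in a..c, (h t)⁻¹ ^ 2)
    (hscale₂ : δ * ∫ t in c..d, (h t)⁻¹ ^ 2 ≤ ∫ t in d..b, (h t)⁻¹ ^ 2) :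
    ∀ s ∈ Icc c d, ∀ t ∈ Icc c d, h t ≤ (1 + δ) / δ * h s := by
  intro s hs t ht
  have hsub : Icc c b ⊆ Icc a b := Icc_subset_Icc_left hac
  have hd := (hconv.subset hsub (convex_Icc c b)).le_mul_of_integral_inv_sq_le hδ hs.1 hs.2 hdb
    (hh.mono hsub) (fun t ht => hpos t (hsub ht)) hscale₂
  have hc : h c ≤ (1 + δ) / δ * h s := by
    have hneg : MapsTo (fun t => -t) (Icc (-d) (-a)) (Icc a b) :=
      fun t ht => ⟨le_neg.2 ht.2, neg_le.2 (ht.1.trans' (neg_le_neg hdb))⟩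
    have hrefl u v : ∫ t in -v..-u, (h (-t))⁻¹ ^ 2 = ∫ t in u..v, (h t)⁻¹ ^ 2 := by
      rw [integral_comp_neg fun t => (h t)⁻¹ ^ 2, neg_neg, neg_neg]
    have := ((hconv.comp_neg_Icc).subset (Icc_subset_Icc_left (neg_le_neg hdb))
      (convex_Icc _ _)).le_mul_of_integral_inv_sq_le hδ (neg_le_neg hs.2) (neg_le_neg hs.1)
      (neg_le_neg hac) (hh.comp continuousOn_neg hneg) (fun t ht => hpos _ (hneg ht))
      (by rw [hrefl, hrefl]; exact hscale₁)
    simpa using this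
  calc h t ≤ max (h c) (h d) :=
        hconv.le_on_segment ⟨hac, hcd.trans hdb⟩ ⟨hac.trans hcd, hdb⟩ (by rwa [segment_eq_Icc hcd])
    _ ≤ (1 + δ) / δ * h s := max_le hc hd

-- If `h` rose above its chord over `[x, z]`, then on a maximal subinterval `[p, r]` where it
-- does, `h` would lie above its own chord and `∫ₚʳ h⁻²` would fall short of `(r - p) / (h p h r)`.
lemma le_affine_of_div_mul_le_integral_inv_sq {x z : ℝ} (hxz : x < z)
    (hh : ContinuousOn h (Icc x z)) (hpos : ∀ t ∈ Icc x z, 0 < h t)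
    (hG : ∀ u ∈ Icc x z, ∀ v ∈ Icc x z, u ≤ v → (v - u) / (h u * h v) ≤ ∫ t in u..v, (h t)⁻¹ ^ 2)
    {y : ℝ} (hy : y ∈ Icc x z) :
    h y ≤ h x + (h z - h x) / (z - x) * (y - x) := by
  set k := (h z - h x) / (z - x)
  by_contra! hlt
  have hφ : ContinuousOn (fun t => h t - (h x + k * (t - x))) (Icc x z) := hh.sub (by fun_prop)
  have hφz : h z - (h x + k * (z - x)) = 0 := by
    rw [div_mul_cancel₀ _ (sub_pos.2 hxz).ne']
    ring
  obtain ⟨p, hp, hp0, hpos_l⟩ := exists_zero_forall_pos_Ioc hy.1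
    (hφ.mono (Icc_subset_Icc_right hy.2)) (by simp) (sub_pos.2 hlt)
  obtain ⟨r, hr, hr0, hpos_r⟩ := exists_zero_forall_pos_Ico hy.2
    (hφ.mono (Icc_subset_Icc_left hy.1)) hφz.le (sub_pos.2 hlt)
  have hpr : p < r := hp.2.trans_le hr.1.le
  have hsub : Icc p r ⊆ Icc x z := Icc_subset_Icc hp.1 hr.2
  have hline t : h x + k * (t - x) = h p + k * (t - p) := by linear_combination -hp0
  have hB : h p + k * (r - p) = h r := by linear_combination hp0 - hr0
  have hle : ∀ t ∈ Icc p r, h p + k * (t - p) ≤ h t := by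
    intro t ht
    rw [← hline, ← sub_nonneg]
    rcases le_total t y with hty | hty
    · rcases ht.1.eq_or_lt with rfl | hpt
      exacts [hp0.ge, (hpos_l t ⟨hpt, hty⟩).le]
    · rcases ht.2.eq_or_lt with rfl | htr
      exacts [hr0.ge, (hpos_r t ⟨hty, htr⟩).le]
  have hint := integral_inv_sq_lt_div_mul_of_affine_le hpr (hpos p (hsub (left_mem_Icc.2 hpr.le)))
    (hB ▸ hpos r (hsub (right_mem_Icc.2 hpr.le))) (hh.mono hsub) hle
    ⟨y, ⟨hp.2.le, hr.1.le⟩, hline y ▸ hlt⟩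
  rw [hB] at hint
  exact (hG p (hsub (left_mem_Icc.2 hpr.le)) r (hsub (right_mem_Icc.2 hpr.le)) hpr.le).not_gt hint

theorem convexOn_of_div_mul_le_integral_inv_sq {a b : ℝ} (hh : ContinuousOn h (Icc a b))
    (hpos : ∀ t ∈ Icc a b, 0 < h t)
    (hG : ∀ u ∈ Icc a b, ∀ v ∈ Icc a b, u ≤ v → (v - u) / (h u * h v) ≤ ∫ t in u..v, (h t)⁻¹ ^ 2) :
    ConvexOn ℝ (Icc a b) h := by
  refine LinearOrder.convexOn_of_lt (convex_Icc a b) fun x hx z hz hxz α β hα hβ hαβ => ?_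
  have hsub : Icc x z ⊆ Icc a b := Icc_subset_Icc hx.1 hz.2
  have hy : α • x + β • z ∈ Icc x z := convex_Icc x z (left_mem_Icc.2 hxz.le)
    (right_mem_Icc.2 hxz.le) hα.le hβ.le hαβ
  have := le_affine_of_div_mul_le_integral_inv_sq hxz (hh.mono hsub) (fun t ht => hpos t (hsub ht))
    (fun u hu v hv => hG u (hsub hu) v (hsub hv)) hy
  refine this.trans_eq ?_
  rw [eq_sub_of_add_eq hαβ]
  simp only [smul_eq_mul]
  field_simp [(sub_pos.2 hxz).ne']
  ring

end InverseSquareIntegrals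

theorem IsPreconnected.forall_pos_or_forall_neg {f : ℝ → ℝ} {s : Set ℝ} (hs : IsPreconnected s)
    (hf : ContinuousOn f s) (hne : ∀ x ∈ s, f x ≠ 0) :
    (∀ x ∈ s, 0 < f x) ∨ (∀ x ∈ s, f x < 0) := by
  by_contra! ⟨⟨x, hx, hfx⟩, ⟨y, hy, hfy⟩⟩
  obtain ⟨z, hz, hfz⟩ := hs.intermediate_value hx hy hf ⟨hfx, hfy⟩
  exact hne z hz hfz

theorem abs_sub_eq_integral_abs_deriv {F F' : ℝ → ℝ} {x y : ℝ} (hxy : x ≤ y)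
    (hF : ContinuousOn F (Icc x y)) (hF' : ∀ t ∈ Ioo x y, HasDerivAt F (F' t) t)
    (hF'c : ContinuousOn F' (Icc x y)) (hne : ∀ t ∈ Icc x y, F' t ≠ 0) :
    |F y - F x| = ∫ t in x..y, |F' t| := by
  rw [← integral_eq_sub_of_hasDerivAt_of_le hxy hF hF' (hF'c.intervalIntegrable_of_Icc hxy)]
  rcases isPreconnected_Icc.forall_pos_or_forall_neg hF'c hne with hpos | hneg
  · rw [abs_of_nonneg (integral_nonneg hxy fun t ht => (hpos t ht).le)]
    refine integral_congr fun t ht => (abs_of_pos (hpos t ?_)).symm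
    rwa [uIcc_of_le hxy] at ht
  · rw [← abs_neg, ← integral_neg,
      abs_of_nonneg (integral_nonneg hxy fun t ht => (neg_pos.2 (hneg t ht)).le)]
    refine integral_congr fun t ht => (abs_of_neg (hneg t ?_)).symm
    rwa [uIcc_of_le hxy] at ht

-- Two-point form of cross-ratio expansion. For `C¹` maps with `F' ≠ 0` it is equivalent to
-- convexity of `1 / √|F'|`, and unlike that convexity it is evidently preserved by composition.
def GeomMeanDerivLeSlope (F F' : ℝ → ℝ) (x y : ℝ) : Prop :=
  |y - x| * √(|F' x| * |F' y|) ≤ |F y - F x|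

lemma inv_one_div_sqrt_abs_sq (r : ℝ) : (1 / √|r|)⁻¹ ^ 2 = |r| := by
  simp

lemma div_one_div_sqrt_abs_mul (u r s : ℝ) : u / (1 / √|r| * (1 / √|s|)) = u * √(|r| * |s|) := by
  simp [Real.sqrt_mul (abs_nonneg r), div_eq_mul_inv, mul_comm]

lemma continuousOn_one_div_sqrt_abs {f : ℝ → ℝ} {s : Set ℝ} (hf : ContinuousOn f s)
    (hne : ∀ x ∈ s, f x ≠ 0) : ContinuousOn (fun x => 1 / √|f x|) s :=
  continuousOn_const.div hf.abs.sqrt fun x hx => by have := hne x hx; positivity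

theorem ConvexOn.geomMeanDerivLeSlope {F F' : ℝ → ℝ} {x y : ℝ} (hxy : x ≤ y)
    (hconv : ConvexOn ℝ (Icc x y) fun t => 1 / √|F' t|) (hF : ContinuousOn F (Icc x y))
    (hF' : ∀ t ∈ Ioo x y, HasDerivAt F (F' t) t) (hF'c : ContinuousOn F' (Icc x y))
    (hne : ∀ t ∈ Icc x y, F' t ≠ 0) :
    GeomMeanDerivLeSlope F F' x y := by
  have := hconv.div_mul_le_integral_inv_sq hxy (continuousOn_one_div_sqrt_abs hF'c hne)
    fun t ht => by have := hne t ht; positivity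
  simp only [inv_one_div_sqrt_abs_sq, div_one_div_sqrt_abs_mul] at this
  rwa [GeomMeanDerivLeSlope, abs_sub_eq_integral_abs_deriv hxy hF hF' hF'c hne,
    abs_of_nonneg (sub_nonneg.2 hxy)]

theorem koebe_principle {F F' : ℝ → ℝ} {a c d b δ : ℝ} (hδ : 0 < δ) (hac : a ≤ c) (hcd : c ≤ d)
    (hdb : d ≤ b) (hF : ∀ z ∈ Icc a b, HasDerivAt F (F' z) z) (hF'c : ContinuousOn F' (Icc a b))
    (hne : ∀ z ∈ Icc a b, F' z ≠ 0)
    (hE : ∀ x ∈ Icc a b, ∀ y ∈ Icc a b, GeomMeanDerivLeSlope F F' x y)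
    (hscale₁ : δ * |F d - F c| ≤ |F c - F a|) (hscale₂ : δ * |F d - F c| ≤ |F b - F d|) :
    ∀ s ∈ Icc c d, ∀ t ∈ Icc c d, |F' s| ≤ ((1 + δ) / δ) ^ 2 * |F' t| := by
  set h := fun z => 1 / √|F' z|
  have hh : ContinuousOn h (Icc a b) := continuousOn_one_div_sqrt_abs hF'c hne
  have hpos : ∀ z ∈ Icc a b, 0 < h z := fun z hz => by have := hne z hz; positivity
  have hint : ∀ x ∈ Icc a b, ∀ y ∈ Icc a b, x ≤ y → |F y - F x| = ∫ t in x..y, (h t)⁻¹ ^ 2 := by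
    intro x hx y hy hxy
    have hsub : Icc x y ⊆ Icc a b := Icc_subset_Icc hx.1 hy.2
    simp only [h, inv_one_div_sqrt_abs_sq]
    exact abs_sub_eq_integral_abs_deriv hxy
      (fun t ht => (hF t (hsub ht)).continuousAt.continuousWithinAt)
      (fun t ht => hF t (hsub (Ioo_subset_Icc_self ht))) (hF'c.mono hsub)
      fun t ht => hne t (hsub ht)
  have hconv : ConvexOn ℝ (Icc a b) h := by
    refine convexOn_of_div_mul_le_integral_inv_sq hh hpos fun x hx y hy hxy => ?_
    have := hE x hx y hy
    rwa [GeomMeanDerivLeSlope, hint x hx y hy hxy, abs_of_nonneg (sub_nonneg.2 hxy),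
      ← div_one_div_sqrt_abs_mul] at this
  have ha : a ∈ Icc a b := ⟨le_rfl, hac.trans (hcd.trans hdb)⟩
  have hc : c ∈ Icc a b := ⟨hac, hcd.trans hdb⟩
  have hd : d ∈ Icc a b := ⟨hac.trans hcd, hdb⟩
  have hb : b ∈ Icc a b := ⟨hac.trans (hcd.trans hdb), le_rfl⟩
  intro s hs t ht
  have hts := hconv.koebe hδ hac hcd hdb hh hpos
    (by rw [← hint c hc d hd hcd, ← hint a ha c hc hac]; exact hscale₁)
    (by rw [← hint c hc d hd hcd, ← hint d hd b hb hdb]; exact hscale₂) s hs t ht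
  have hspos := hpos s ⟨hac.trans hs.1, hs.2.trans hdb⟩
  have htpos := hpos t ⟨hac.trans ht.1, ht.2.trans hdb⟩
  have hinv : (h s)⁻¹ ≤ (1 + δ) / δ * (h t)⁻¹ := by
    rw [← div_eq_mul_inv, le_div_iff₀ htpos, inv_mul_le_iff₀ hspos, mul_comm]
    exact hts
  calc |F' s| = (h s)⁻¹ ^ 2 := (inv_one_div_sqrt_abs_sq _).symm
    _ ≤ ((1 + δ) / δ * (h t)⁻¹) ^ 2 := pow_le_pow_left₀ (by positivity) hinv 2
    _ = ((1 + δ) / δ) ^ 2 * |F' t| := by rw [mul_pow, inv_one_div_sqrt_abs_sq]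

namespace GeomMeanDerivLeSlope

variable {f g f' g' : ℝ → ℝ} {x y : ℝ}

theorem symm (h : GeomMeanDerivLeSlope f f' x y) : GeomMeanDerivLeSlope f f' y x := by
  rwa [GeomMeanDerivLeSlope, abs_sub_comm, mul_comm |f' y|, abs_sub_comm (f x)]

theorem comp (hg : GeomMeanDerivLeSlope g g' (f x) (f y)) (hf : GeomMeanDerivLeSlope f f' x y) :
    GeomMeanDerivLeSlope (g ∘ f) (fun z => f' z * g' (f z)) x y := by
  unfold GeomMeanDerivLeSlope at *
  calc |y - x| * √(|f' x * g' (f x)| * |f' y * g' (f y)|)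
      = |y - x| * √(|f' x| * |f' y|) * √(|g' (f x)| * |g' (f y)|) := by
        rw [abs_mul, abs_mul, mul_assoc |y - x|, ← Real.sqrt_mul (by positivity)]
        congr 2
        ring
    _ ≤ |f y - f x| * √(|g' (f x)| * |g' (f y)|) :=
        mul_le_mul_of_nonneg_right hf (Real.sqrt_nonneg _)
    _ ≤ |g (f y) - g (f x)| := hg

end GeomMeanDerivLeSlope

theorem hasDerivWithinAt_iterate {𝕜 : Type*} [NontriviallyNormedField 𝕜] {f f' : 𝕜 → 𝕜}
    {s : Set 𝕜} (hf : ∀ x ∈ s, HasDerivWithinAt f (f' x) s x) (hs : MapsTo f s s) (n : ℕ)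
    {x : 𝕜} (hx : x ∈ s) :
    HasDerivWithinAt f^[n] (∏ i ∈ Finset.range n, f' (f^[i] x)) s x := by
  induction n with
  | zero => simpa using hasDerivWithinAt_id x s
  | succ n ih =>
    rw [Function.iterate_succ', Finset.prod_range_succ, mul_comm]
    exact (hf _ (hs.iterate n hx)).comp x ih (hs.iterate n)

theorem geomMeanDerivLeSlope_iterate {T T' : ℝ → ℝ} {s : Set ℝ} (hs : s.OrdConnected)
    (hmaps : MapsTo T s s) (hT : ContinuousOn T s)
    (hE : ∀ u ∈ s, ∀ v ∈ s, (∀ w ∈ uIcc u v, T' w ≠ 0) → GeomMeanDerivLeSlope T T' u v)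
    {x y : ℝ} (hx : x ∈ s) (hy : y ∈ s) (n : ℕ)
    (hne : ∀ z ∈ uIcc x y, ∏ i ∈ Finset.range n, T' (T^[i] z) ≠ 0) :
    GeomMeanDerivLeSlope T^[n] (fun z => ∏ i ∈ Finset.range n, T' (T^[i] z)) x y := by
  induction n with
  | zero => simp [GeomMeanDerivLeSlope]
  | succ n ih =>
    simp only [Finset.prod_range_succ] at hne ⊢
    have hTn : GeomMeanDerivLeSlope T T' (T^[n] x) (T^[n] y) := by
      refine hE _ (hmaps.iterate n hx) _ (hmaps.iterate n hy) fun w hw => ?_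
      obtain ⟨z, hz, rfl⟩ :=
        intermediate_value_uIcc ((hT.iterate hmaps n).mono (hs.uIcc_subset hx hy)) hw
      exact right_ne_zero_of_mul (hne z hz)
    rw [Function.iterate_succ']
    exact hTn.comp (ih fun z hz => left_ne_zero_of_mul (hne z hz))

theorem convexOn_Icc_of_convexOn_Ioo {g : ℝ → ℝ} {x y : ℝ} (hxy : x < y)
    (hconv : ConvexOn ℝ (Ioo x y) g) (hg : ContinuousOn g (Icc x y)) :
    ConvexOn ℝ (Icc x y) g := by
  have hcl : closure (Ioo x y ×ˢ Ioo x y) = Icc x y ×ˢ Icc x y := by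
    rw [closure_prod_eq, closure_Ioo hxy.ne]
  refine ⟨convex_Icc x y, fun u hu v hv α β hα hβ hαβ => ?_⟩
  have hcomb : MapsTo (fun p : ℝ × ℝ => α • p.1 + β • p.2) (Icc x y ×ˢ Icc x y) (Icc x y) :=
    fun p hp => convex_Icc x y hp.1 hp.2 hα hβ hαβ
  refine le_on_closure (s := Ioo x y ×ˢ Ioo x y) (f := fun p : ℝ × ℝ => g (α • p.1 + β • p.2))
    (g := fun p => α • g p.1 + β • g p.2) (fun p hp => hconv.2 hp.1 hp.2 hα hβ hαβ) ?_ ?_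
    (x := (u, v)) (by rw [hcl]; exact ⟨hu, hv⟩)
  · rw [hcl]
    exact hg.comp (by fun_prop) hcomb
  · rw [hcl]
    exact ((hg.comp continuousOn_fst fun p hp => hp.1).const_smul α).add
      ((hg.comp continuousOn_snd fun p hp => hp.2).const_smul β)

theorem geomMeanDerivLeSlope_derivWithin {T : ℝ → ℝ} {l r : ℝ} (hT : ContDiffOn ℝ 1 T (Icc l r))
    (hSchw : ∀ p q : ℝ, l ≤ p → p ≤ q → q ≤ r → (∀ x ∈ Icc p q, deriv T x ≠ 0) →
      ConvexOn ℝ (Icc p q) (fun x => 1 / √|deriv T x|))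
    {x y : ℝ} (hx : x ∈ Icc l r) (hy : y ∈ Icc l r)
    (hne : ∀ z ∈ uIcc x y, derivWithin T (Icc l r) z ≠ 0) :
    GeomMeanDerivLeSlope T (derivWithin T (Icc l r)) x y := by
  wlog hxy : x < y generalizing x y
  · rcases (not_lt.1 hxy).eq_or_lt with rfl | hyx
    · simp [GeomMeanDerivLeSlope]
    · exact (this hy hx (uIcc_comm x y ▸ hne) hyx).symm
  set D := derivWithin T (Icc l r)
  have hsub : Icc x y ⊆ Icc l r := Icc_subset_Icc hx.1 hy.2
  have hne' : ∀ z ∈ Icc x y, D z ≠ 0 := fun z hz => hne z (by rwa [uIcc_of_le hxy.le])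
  have hDc : ContinuousOn D (Icc x y) :=
    (hT.continuousOn_derivWithin (uniqueDiffOn_Icc (hx.1.trans_lt (hxy.trans_le hy.2)))
      le_rfl).mono hsub
  have hnhds : ∀ z ∈ Ioo x y, Icc l r ∈ nhds z := fun z hz =>
    Icc_mem_nhds (hx.1.trans_lt hz.1) (hz.2.trans_le hy.2)
  have hderiv : ∀ z ∈ Ioo x y, deriv T z = D z := fun z hz =>
    (derivWithin_of_mem_nhds (hnhds z hz)).symm
  -- `hSchw` speaks about `deriv T`, which is junk at `l` and `r` and agrees with `D` only inside;
  -- convexity up to the endpoints is recovered by continuity.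
  have hconv : ConvexOn ℝ (Ioo x y) fun z => 1 / √|D z| := by
    refine ⟨convex_Ioo x y, fun u hu v hv α β hα hβ hαβ => ?_⟩
    have hsub' : Icc (min u v) (max u v) ⊆ Ioo x y :=
      Icc_subset_Ioo (lt_min hu.1 hv.1) (max_lt hu.2 hv.2)
    have := hSchw (min u v) (max u v) (hx.1.trans (lt_min hu.1 hv.1).le) min_le_max
      ((max_lt hu.2 hv.2).le.trans hy.2)
      fun z hz => hderiv z (hsub' hz) ▸ hne' z (Ioo_subset_Icc_self (hsub' hz))
    refine (this.congr (g := fun z => 1 / √|D z|) fun z hz => ?_).2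
      ⟨min_le_left u v, le_max_left u v⟩ ⟨min_le_right u v, le_max_right u v⟩ hα hβ hαβ
    simp only [hderiv z (hsub' hz)]
  refine (convexOn_Icc_of_convexOn_Ioo hxy hconv (continuousOn_one_div_sqrt_abs hDc hne')
    ).geomMeanDerivLeSlope hxy.le (hT.continuousOn.mono hsub) (fun z hz => ?_) hDc hne'
  exact (hT.differentiableOn one_ne_zero z (hsub (Ioo_subset_Icc_self hz))).hasDerivWithinAt
    |>.hasDerivAt (hnhds z hz)

theorem stmt12_general (T : ℝ → ℝ) (hmaps : MapsTo T (Icc (0:ℝ) 1) (Icc (0:ℝ) 1))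
    (hC2 : ContDiffOn ℝ 2 T (Icc (0:ℝ) 1))
    (hSchw : ∀ p q : ℝ, 0 ≤ p → p ≤ q → q ≤ 1 →
      (∀ x ∈ Icc p q, deriv T x ≠ 0) →
      ConvexOn ℝ (Icc p q) (fun x => 1 / Real.sqrt |deriv T x|))
    (n : ℕ) (a c d b δ : ℝ) (hδ : 0 < δ)
    (h0a : 0 ≤ a) (hac : a ≤ c) (hcd : c ≤ d) (hdb : d ≤ b) (hb1 : b ≤ 1)
    (hder : ∀ x ∈ Icc a b, deriv (T^[n]) x ≠ 0)
    (hscale1 : δ * |T^[n] d - T^[n] c| ≤ |T^[n] c - T^[n] a|)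
    (hscale2 : δ * |T^[n] d - T^[n] c| ≤ |T^[n] b - T^[n] d|) :
    ∀ s ∈ Icc c d, ∀ t ∈ Icc c d,
      |deriv (T^[n]) s| ≤ ((1 + δ) / δ) ^ 2 * |deriv (T^[n]) t| := by
  have hI : Icc a b ⊆ Icc (0:ℝ) 1 := Icc_subset_Icc h0a hb1
  have hD : ∀ z ∈ Icc (0:ℝ) 1, HasDerivWithinAt T (derivWithin T (Icc 0 1) z) (Icc 0 1) z :=
    fun z hz => (hC2.differentiableOn (by norm_num) z hz).hasDerivWithinAt
  set P := fun z => ∏ i ∈ Finset.range n, derivWithin T (Icc 0 1) (T^[i] z)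
  have hF : ∀ z ∈ Icc a b, HasDerivAt (T^[n]) (P z) z := by
    intro z hz
    have hdiff := (differentiableAt_of_deriv_ne_zero (hder z hz)).hasDerivAt
    exact hdiff.congr_deriv <| UniqueDiffWithinAt.eq_deriv _
      (uniqueDiffOn_Icc zero_lt_one z (hI hz)) hdiff.hasDerivWithinAt
      (hasDerivWithinAt_iterate hD hmaps n (hI hz))
  have hP0 : ∀ z ∈ Icc a b, P z ≠ 0 := fun z hz => (hF z hz).deriv ▸ hder z hz
  have hPc : ContinuousOn P (Icc a b) := (continuousOn_finsetProd _ fun i _ =>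
    (hC2.continuousOn_derivWithin (uniqueDiffOn_Icc zero_lt_one) (by norm_num)).comp
      (hC2.continuousOn.iterate hmaps i) (hmaps.iterate i)).mono hI
  have hE : ∀ x ∈ Icc a b, ∀ y ∈ Icc a b, GeomMeanDerivLeSlope (T^[n]) P x y :=
    fun x hx y hy => geomMeanDerivLeSlope_iterate ordConnected_Icc hmaps hC2.continuousOn
      (fun u hu v hv => geomMeanDerivLeSlope_derivWithin (hC2.of_le (by norm_num)) hSchw hu hv)
      (hI hx) (hI hy) n fun z hz => hP0 z (uIcc_subset_Icc hx hy hz)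
  intro s hs t ht
  rw [(hF s ⟨hac.trans hs.1, hs.2.trans hdb⟩).deriv, (hF t ⟨hac.trans ht.1, ht.2.trans hdb⟩).deriv]
  exact koebe_principle hδ hac hcd hdb hF hPc hP0 hE hscale1 hscale2 s hs t ht

/-- Koebe Principle. Let `T : [0,1] → [0,1]` be `C²` with non-positive
Schwarzian derivative (`1/√|T'|` locally convex where `T' ≠ 0`). If `Tⁿ` is a `C²`
diffeomorphism on `W' = [a,b] ⊇ W = [c,d]` and `Tⁿ(W')` contains a `δ`-scaled
neighborhood of `Tⁿ(W)`, then the distortion of `Tⁿ` on `W` is at most `((1+δ)/δ)²`. -/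
theorem stmt12 (T : ℝ → ℝ) (hmaps : MapsTo T (Icc (0:ℝ) 1) (Icc (0:ℝ) 1))
    (hC2 : ContDiffOn ℝ 2 T (Icc (0:ℝ) 1))
    (hSchw : ∀ p q : ℝ, 0 ≤ p → p ≤ q → q ≤ 1 →
      (∀ x ∈ Icc p q, deriv T x ≠ 0) →
      ConvexOn ℝ (Icc p q) (fun x => 1 / Real.sqrt |deriv T x|))
    (n : ℕ) (hn : 1 ≤ n) (a c d b δ : ℝ) (hδ : 0 < δ)
    (h0a : 0 ≤ a) (hac : a ≤ c) (hcd : c ≤ d) (hdb : d ≤ b) (hb1 : b ≤ 1)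
    (hinj : InjOn (T^[n]) (Icc a b))
    (hder : ∀ x ∈ Icc a b, deriv (T^[n]) x ≠ 0)
    (hscale1 : δ * |T^[n] d - T^[n] c| ≤ |T^[n] c - T^[n] a|)
    (hscale2 : δ * |T^[n] d - T^[n] c| ≤ |T^[n] b - T^[n] d|) :
    ∀ s ∈ Icc c d, ∀ t ∈ Icc c d,
      |deriv (T^[n]) s| ≤ ((1 + δ) / δ) ^ 2 * |deriv (T^[n]) t| :=
  stmt12_general T hmaps hC2 hSchw n a c d b δ hδ h0a hac hcd hdb hb1 hder hscale1 hscale2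
end
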